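/- If A is an unambiguous automaton, then for any productive pair (q,a) and any tree t with t(ε) = a, there is at most one transition δ starting from (q,a) such that t ∈ L_δ. -/

import Mathlib

open Filter Set

/-- An infinite binary tree over alphabet `A`. -/
abbrev Tree' (A : Type) := List Bool → A

/-- Subtree of `t` rooted at vertex `v`. -/
def subtreeAt {A : Type} (t : Tree' A) (v : List Bool) : Tree' A := fun w => t (v ++ w)

/-- Substitution `t[r/v]`: replace the subtree of `t` at `v` by `r`. -/
def substAt {A : Type} (t r : Tree' A) (v : List Bool) : Tree' A :=
  fun w => if v <+: w then r (w.drop v.length) else t w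

/-- A nondeterministic parity tree automaton. -/
structure NPA (Q A : Type) where
  q0 : Q
  Δ : Set (Q × Q × A × Q)
  Ω : Q → ℕ

/-- `ρ` is a run of `M` on `t`. `false` = left, `true` = right. -/
def NPA.IsRun {Q A : Type} (M : NPA Q A) (t : Tree' A) (ρ : Tree' Q) : Prop :=
  ∀ v : List Bool, (ρ v, ρ (v ++ [false]), t v, ρ (v ++ [true])) ∈ M.Δ

/-- Length-`n` prefix of an infinite branch, as a vertex. -/
def pref (b : ℕ → Bool) (n : ℕ) : List Bool := (List.range n).map b

/-- `ρ` is an accepting run of `M` on `t`. -/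
def NPA.Accepting {Q A : Type} (M : NPA Q A) (t : Tree' A) (ρ : Tree' Q) : Prop :=
  M.IsRun t ρ ∧
    ∀ b : ℕ → Bool, Even (Filter.limsup (fun n => M.Ω (ρ (pref b n))) Filter.atTop)

/-- Accepting run starting from state `q`. -/
def NPA.AcceptingFrom {Q A : Type} (M : NPA Q A) (q : Q) (t : Tree' A) (ρ : Tree' Q) : Prop :=
  M.Accepting t ρ ∧ ρ [] = q

/-- The language recognised by `M`. -/
def NPA.Lang {Q A : Type} (M : NPA Q A) : Set (Tree' A) :=
  { t | ∃ ρ, M.AcceptingFrom M.q0 t ρ }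

/-- `M` is unambiguous. -/
def NPA.Unambiguous {Q A : Type} (M : NPA Q A) : Prop :=
  ∀ (t : Tree' A) (ρ₁ ρ₂ : Tree' Q),
    M.AcceptingFrom M.q0 t ρ₁ → M.AcceptingFrom M.q0 t ρ₂ → ρ₁ = ρ₂

/-- `(q, a)` is productive. -/
def NPA.Productive {Q A : Type} (M : NPA Q A) (q : Q) (a : A) : Prop :=
  ∃ (t : Tree' A) (ρ : Tree' Q) (v : List Bool),
    M.AcceptingFrom M.q0 t ρ ∧ ρ v = q ∧ t v = a

/-- The transition `δ` starts from the pair `(q, a)`. -/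
def NPA.StartsFrom {Q A : Type} (M : NPA Q A) (δ : Q × Q × A × Q) (q : Q) (a : A) : Prop :=
  δ ∈ M.Δ ∧ δ.1 = q ∧ δ.2.2.1 = a

/-- `L_δ`: trees with an accepting run using transition `δ` at the root. -/
def NPA.Ldelta {Q A : Type} (M : NPA Q A) (δ : Q × Q × A × Q) : Set (Tree' A) :=
  { t | ∃ ρ : Tree' Q, M.Accepting t ρ ∧
      ρ [] = δ.1 ∧ ρ [false] = δ.2.1 ∧ t [] = δ.2.2.1 ∧ ρ [true] = δ.2.2.2 }

/-! Graft an accepting run from `q` below a vertex where an accepting run from `q₀` visits `q`: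
the result is again accepting from `q₀`. Two different accepting runs from `q` on `t` would thus
give two different accepting runs from `q₀` on the grafted tree, so by unambiguity they coincide,
and with them the transitions they use at the root. -/

lemma pref_length (b : ℕ → Bool) (n : ℕ) : (pref b n).length = n := by
  simp [pref]

lemma pref_add (b : ℕ → Bool) (m n : ℕ) :
    pref b (m + n) = pref b m ++ pref (fun i => b (m + i)) n := by
  simp [pref, List.range_add, Function.comp_def]

lemma take_pref (b : ℕ → Bool) (k n : ℕ) : (pref b n).take k = pref b (min k n) := by
  simp [pref, ← List.map_take]

lemma eq_pref_of_prefix_pref {b : ℕ → Bool} {n : ℕ} {v : List Bool} (h : v <+: pref b n) :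
    v = pref b v.length := by
  have hv := List.prefix_iff_eq_take.1 h
  rwa [take_pref, min_eq_left (by simpa [pref_length] using h.length_le)] at hv

section substAt

variable {A : Type} {t r : Tree' A} {v w : List Bool}

@[simp]
lemma substAt_append (t r : Tree' A) (v w : List Bool) : substAt t r v (v ++ w) = r w := by
  simp [substAt]

lemma substAt_of_not_prefix (hw : ¬ v <+: w) : substAt t r v w = t w :=
  if_neg hw

lemma substAt_concat_of_not_prefix (hv : r [] = t v) (hw : ¬ v <+: w) (c : Bool) :
    substAt t r v (w ++ [c]) = t (w ++ [c]) := by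
  by_cases hc : v = w ++ [c]
  · subst hc
    simpa [substAt] using hv
  · exact substAt_of_not_prefix (by rw [List.prefix_concat_iff]; tauto)

lemma substAt_nil (hv : r [] = t v) : substAt t r v [] = t [] := by
  cases v with
  | nil => simpa [substAt] using hv
  | cons => rfl

end substAt

namespace NPA

variable {Q A : Type} {M : NPA Q A} {t₀ t : Tree' A} {ρ₀ ρ : Tree' Q} {v : List Bool}

lemma IsRun.graft (h₀ : M.IsRun t₀ ρ₀) (h : M.IsRun t ρ) (hv : ρ [] = ρ₀ v) :
    M.IsRun (substAt t₀ t v) (substAt ρ₀ ρ v) := by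
  intro w
  by_cases hw : v <+: w
  · obtain ⟨u, rfl⟩ := hw
    simpa only [List.append_assoc, substAt_append] using h u
  · rw [substAt_of_not_prefix hw, substAt_of_not_prefix hw,
      substAt_concat_of_not_prefix hv hw, substAt_concat_of_not_prefix hv hw]
    exact h₀ w

lemma Accepting.graft (h₀ : M.Accepting t₀ ρ₀) (h : M.Accepting t ρ) (hv : ρ [] = ρ₀ v) :
    M.Accepting (substAt t₀ t v) (substAt ρ₀ ρ v) := by
  refine ⟨h₀.1.graft h.1 hv, fun b => ?_⟩
  by_cases hb : pref b v.length = v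
  · -- the branch enters the grafted run at `v`, after which it follows the shifted branch in `ρ`
    have hshift : ∀ n, substAt ρ₀ ρ v (pref b (n + v.length)) =
        ρ (pref (fun i => b (v.length + i)) n) := fun n => by
      rw [add_comm, pref_add, hb, substAt_append]
    rw [← limsup_nat_add _ v.length]
    simpa only [hshift] using h.2 _
  · have hstay : ∀ n, substAt ρ₀ ρ v (pref b n) = ρ₀ (pref b n) := fun n =>
      substAt_of_not_prefix fun hp => hb (eq_pref_of_prefix_pref hp).symm
    simpa only [hstay] using h₀.2 b

theorem Unambiguous.eq_of_acceptingFrom (hU : M.Unambiguous) {q : Q}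
    (h₀ : M.AcceptingFrom M.q0 t₀ ρ₀) (hq : ρ₀ v = q) {ρ₁ ρ₂ : Tree' Q}
    (h₁ : M.AcceptingFrom q t ρ₁) (h₂ : M.AcceptingFrom q t ρ₂) : ρ₁ = ρ₂ := by
  have graft : ∀ ρ, M.AcceptingFrom q t ρ →
      M.AcceptingFrom M.q0 (substAt t₀ t v) (substAt ρ₀ ρ v) := fun ρ h =>
    ⟨h₀.1.graft h.1 (h.2.trans hq.symm), (substAt_nil (h.2.trans hq.symm)).trans h₀.2⟩
  funext w
  simpa only [substAt_append] using congrFun (hU _ _ _ (graft ρ₁ h₁) (graft ρ₂ h₂)) (v ++ w)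

end NPA

theorem stmt7_general {Q A : Type} (M : NPA Q A) (hU : M.Unambiguous) (q : Q) (a : A)
    (hprod : M.Productive q a) (t : Tree' A) :
    ∀ δ₁ δ₂ : Q × Q × A × Q, M.StartsFrom δ₁ q a → M.StartsFrom δ₂ q a →
      t ∈ M.Ldelta δ₁ → t ∈ M.Ldelta δ₂ → δ₁ = δ₂ := by
  rintro δ₁ δ₂ h₁ h₂ ⟨ρ₁, hρ₁, r₁, l₁, a₁, s₁⟩ ⟨ρ₂, hρ₂, r₂, l₂, a₂, s₂⟩
  obtain ⟨t₀, ρ₀, v, h₀, hq, -⟩ := hprod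
  obtain rfl : ρ₁ = ρ₂ :=
    hU.eq_of_acceptingFrom h₀ hq ⟨hρ₁, r₁.trans h₁.2.1⟩ ⟨hρ₂, r₂.trans h₂.2.1⟩
  exact Prod.ext (r₁.symm.trans r₂) <| Prod.ext (l₁.symm.trans l₂) <|
    Prod.ext (a₁.symm.trans a₂) (s₁.symm.trans s₂)

theorem stmt7 {Q A : Type} (M : NPA Q A) (hU : M.Unambiguous) (q : Q) (a : A)
    (hprod : M.Productive q a) (t : Tree' A) (ht : t [] = a) :
    ∀ δ₁ δ₂ : Q × Q × A × Q, M.StartsFrom δ₁ q a → M.StartsFrom δ₂ q a →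
      t ∈ M.Ldelta δ₁ → t ∈ M.Ldelta δ₂ → δ₁ = δ₂ :=
  stmt7_general M hU q a hprod t
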